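/- Let k ≥ 1 and i₁, …, i_k ≥ 1 be integers, and let M = Mon⟨a, b | b a^{i₁} b a^{i₂} ⋯ b a^{i_k} b a = a⟩. Then for every nonempty word w that is a product of factors from {a, ba}, the element of M represented by w is L-related to the image of a in M; that is, the principal left ideals M·w̄ and M·ā coincide, where w̄ and ā denote the images of w and a in M. -/

import Mathlib

/-!
Write `α`, `β` for the images of `a`, `b` and `B` for the image of `b a^{i₁} ⋯ b a^{i_k}`, so
that the relation reads `B β α = α`. Since `k ≥ 1` and all `iⱼ ≥ 1`, `B = β α R = C α` for
some `R`, `C`. Hence `B · βα = α`, `C · αβα = α` and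
`βC · αα = βBα = βB·Bβα = β·Bβα·Rβα = βαRβα = Bβα = α`, so `βα`, `αβα` and `αα` are all
`L`-related to `α`. As `L` is a right congruence, a product `p₁ ⋯ pₙ` of
factors `pᵢ ∈ {α, βα}` is `L`-related to `α`, by induction on `n`.
-/

/-- The `i`-fold concatenation of a word with itself. -/
def listPow {σ : Type*} (w : List σ) (i : ℕ) : List σ :=
  (List.replicate i w).flatten

/-- The one-relation monoid `Mon⟨A | u = v⟩` over the alphabet `Fin k`. -/
abbrev OneRelMonoid {k : ℕ} (u v : List (Fin k)) :=
  PresentedMonoid (fun x y : FreeMonoid (Fin k) =>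
    x = FreeMonoid.ofList u ∧ y = FreeMonoid.ofList v)

/-- Evaluation of a word in the one-relation monoid. -/
def OneRelMonoid.eval {k : ℕ} (u v : List (Fin k)) (w : List (Fin k)) :
    OneRelMonoid u v :=
  PresentedMonoid.mk _ (FreeMonoid.ofList w)

/-- The letter `a`. -/
def aw : List (Fin 2) := [0]

/-- The letter `b`. -/
def bw : List (Fin 2) := [1]

/-- The word `b a^{i₁} b a^{i₂} ⋯ b a^{i_k} b a`. -/
def monadicLhs (k : ℕ) (I : Fin k → ℕ) : List (Fin 2) :=
  (List.ofFn fun j : Fin k => bw ++ listPow aw (I j)).flatten ++ bw ++ aw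

section LRelated

variable {M : Type*} [Monoid M]

/-- Green's relation `L`. -/
def LRelated (x y : M) : Prop :=
  Set.range (fun m : M => m * x) = Set.range (fun m : M => m * y)

theorem lRelated_iff {x y : M} :
    LRelated x y ↔ (∃ m, m * x = y) ∧ ∃ m, m * y = x := by
  refine ⟨fun h => ⟨?_, ?_⟩, ?_⟩
  · obtain ⟨m, hm⟩ : y ∈ Set.range (fun m : M => m * x) := h ▸ ⟨1, one_mul y⟩
    exact ⟨m, hm⟩
  · obtain ⟨m, hm⟩ : x ∈ Set.range (fun m : M => m * y) := h.symm ▸ ⟨1, one_mul x⟩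
    exact ⟨m, hm⟩
  rintro ⟨⟨m, rfl⟩, ⟨n, hn⟩⟩
  refine Set.Subset.antisymm ?_ ?_
  · rintro _ ⟨l, rfl⟩
    exact ⟨l * n, by simp only [mul_assoc, hn]⟩
  · rintro _ ⟨l, rfl⟩
    exact ⟨l * m, mul_assoc l m x⟩

theorem LRelated.trans {x y z : M} (hxy : LRelated x y) (hyz : LRelated y z) :
    LRelated x z :=
  Eq.trans hxy hyz

theorem LRelated.mul_right {x y : M} (h : LRelated x y) (z : M) :
    LRelated (x * z) (y * z) := by
  obtain ⟨⟨m, hm⟩, ⟨n, hn⟩⟩ := lRelated_iff.mp h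
  exact lRelated_iff.mpr ⟨⟨m, by rw [← mul_assoc, hm]⟩, ⟨n, by rw [← mul_assoc, hn]⟩⟩

theorem lRelated_mul_of_mul_mul_eq {x y z : M} (h : z * (y * x) = x) :
    LRelated (y * x) x :=
  lRelated_iff.mpr ⟨⟨z, h⟩, ⟨y, rfl⟩⟩

variable {a b B C R : M} (hrel : B * (b * a) = a)
include hrel

theorem lRelated_mul_mul_of_eq_mul (hC : B = C * a) : LRelated (a * b * a) a :=
  lRelated_mul_of_mul_mul_eq (z := C) (by rw [mul_assoc, ← mul_assoc, ← hC, hrel])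

theorem lRelated_mul_self_of_eq_mul (hC : B = C * a) (hR : B = b * a * R) :
    LRelated (a * a) a := by
  refine lRelated_mul_of_mul_mul_eq (z := b * C) ?_
  calc b * C * (a * a) = b * B * a := by rw [hC]; simp only [mul_assoc]
    _ = b * B * (B * (b * a)) := by rw [hrel]
    _ = b * (B * (b * a)) * R * (b * a) := by nth_rw 2 [hR]; simp only [mul_assoc]
    _ = b * a * R * (b * a) := by rw [hrel]
    _ = a := by rw [← hR, hrel]

theorem lRelated_prod_of_forall_mem (hC : B = C * a) (hR : B = b * a * R)
    (ps : List M) (hne : ps ≠ []) (hps : ∀ p ∈ ps, p = a ∨ p = b * a) :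
    LRelated ps.prod a := by
  have hfactor : ∀ p, p = a ∨ p = b * a → LRelated p a := by
    rintro p (rfl | rfl)
    · rfl
    · exact lRelated_mul_of_mul_mul_eq hrel
  have hstep : ∀ p, p = a ∨ p = b * a → LRelated (a * p) a := by
    rintro p (rfl | rfl)
    · exact lRelated_mul_self_of_eq_mul hrel hC hR
    · exact mul_assoc a b a ▸ lRelated_mul_mul_of_eq_mul hrel hC
  induction ps using List.reverseRecOn with
  | nil => exact absurd rfl hne
  | append_singleton qs p ih =>
    have hp := hps p (by simp)
    rw [List.prod_append, List.prod_singleton]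
    rcases eq_or_ne qs [] with rfl | hqs
    · simpa using hfactor p hp
    · exact ((ih hqs fun q hq => hps q (by simp [hq])).mul_right p).trans (hstep p hp)

end LRelated

section ProdOfFn

variable {M : Type*} [Monoid M] (x y : M) {k : ℕ} (I : Fin (k + 1) → ℕ)

theorem exists_prod_ofFn_mul_pow_eq_mul_mul (hI : 1 ≤ I 0) :
    ∃ R, (List.ofFn fun j => x * y ^ I j).prod = x * y * R := by
  obtain ⟨m, hm⟩ := Nat.exists_eq_add_of_le' hI
  refine ⟨y ^ m * (List.ofFn fun j : Fin k => x * y ^ I j.succ).prod, ?_⟩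
  rw [List.ofFn_succ, List.prod_cons, hm, pow_succ']
  simp only [mul_assoc]

theorem exists_prod_ofFn_mul_pow_eq_mul (hI : 1 ≤ I (Fin.last k)) :
    ∃ C, (List.ofFn fun j => x * y ^ I j).prod = C * y := by
  obtain ⟨m, hm⟩ := Nat.exists_eq_add_of_le' hI
  refine ⟨(List.ofFn fun j : Fin k => x * y ^ I j.castSucc).prod * (x * y ^ m), ?_⟩
  rw [List.ofFn_succ', List.concat_eq_append, List.prod_append, List.prod_singleton, hm,
    pow_succ]
  simp only [mul_assoc]

end ProdOfFn

namespace OneRelMonoid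

variable {n : ℕ} (u v : List (Fin n))

theorem eval_append (x y : List (Fin n)) : eval u v (x ++ y) = eval u v x * eval u v y :=
  map_mul _ _ _

theorem eval_flatten (ws : List (List (Fin n))) :
    eval u v ws.flatten = (ws.map (eval u v)).prod := by
  rw [eval, FreeMonoid.ofList_flatten, map_list_prod, List.map_map]
  rfl

theorem eval_listPow (w : List (Fin n)) (i : ℕ) : eval u v (listPow w i) = eval u v w ^ i := by
  rw [listPow, eval_flatten, List.map_replicate, List.prod_replicate]

theorem eval_rel : eval u v u = eval u v v :=
  Quotient.sound (ConGen.Rel.of _ _ ⟨rfl, rfl⟩)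

end OneRelMonoid

open OneRelMonoid in
theorem eval_monadicLhs (u v : List (Fin 2)) (k : ℕ) (I : Fin k → ℕ) :
    eval u v (monadicLhs k I) =
      (List.ofFn fun j => eval u v bw * eval u v aw ^ I j).prod * (eval u v bw * eval u v aw) := by
  rw [monadicLhs]
  simp only [eval_append, eval_flatten, List.map_ofFn, Function.comp_def, eval_listPow,
    mul_assoc]

/-- Let `k ≥ 1` and `i₁, …, i_k ≥ 1`, and let
`M = Mon⟨a, b | b a^{i₁} b a^{i₂} ⋯ b a^{i_k} b a = a⟩`.  Then every nonempty word `w`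
that is a product of factors from `{a, ba}` represents an element of `M` that is
L-related to the image of `a`: the principal left ideals `M·w̄` and `M·ā` coincide. -/
theorem monadic_L_class_of_a (k : ℕ) (hk : 1 ≤ k) (I : Fin k → ℕ) (hI : ∀ j, 1 ≤ I j)
    (w : List (Fin 2))
    (hw : ∃ parts : List (List (Fin 2)), parts ≠ [] ∧
      (∀ p ∈ parts, p = aw ∨ p = bw ++ aw) ∧ w = parts.flatten) :
    (Set.range fun m : OneRelMonoid (monadicLhs k I) aw =>
        m * OneRelMonoid.eval (monadicLhs k I) aw w) =
      (Set.range fun m : OneRelMonoid (monadicLhs k I) aw =>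
        m * OneRelMonoid.eval (monadicLhs k I) aw aw) := by
  obtain ⟨parts, hne, hparts, rfl⟩ := hw
  obtain ⟨k, rfl⟩ : ∃ k', k = k' + 1 := ⟨k - 1, by omega⟩
  rw [OneRelMonoid.eval_flatten]
  set e := OneRelMonoid.eval (monadicLhs (k + 1) I) aw
  obtain ⟨R, hR⟩ := exists_prod_ofFn_mul_pow_eq_mul_mul (e bw) (e aw) I (hI 0)
  obtain ⟨C, hC⟩ := exists_prod_ofFn_mul_pow_eq_mul (e bw) (e aw) I (hI (Fin.last k))
  have hrel := (eval_monadicLhs _ aw (k + 1) I).symm.trans (OneRelMonoid.eval_rel _ _)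
  refine lRelated_prod_of_forall_mem hrel hC hR _ (by simpa using hne) ?_
  simp only [List.forall_mem_map]
  rintro p hp
  rcases hparts p hp with rfl | rfl
  · exact Or.inl rfl
  · exact Or.inr (OneRelMonoid.eval_append _ _ _ _)
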